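/- Let U and V be independent real random variables with laws μ₁ and μ₂, and for each natural number k ≥ 1 let X_k be a random variable with the Beta(k,k) distribution on (0,1), independent of (U, V). Then the law of U·X_k + V·(1 - X_k) converges weakly as k → ∞ to the law of (U + V)/2. Equivalently, the pushforward of μ₁ ⋆_k μ₂ under the map x ↦ 2x converges weakly to the ordinary convolution μ₁ * μ₂. -/

import Mathlib

/-!
On `(0,1)` the Beta(a,a) density is proportional to `(1/4 - (x - 1/2)^2)^(a-1)`. Comparing its
values on `{|x - 1/2| ≥ η}` with those on `[1/2 - η/2, 1/2 + η/2]`, where it is larger by the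
factor `((1/4 - η^2/4) / (1/4 - η^2))^(a-1)`, shows that the Beta(k,k) mass outside
`(1/2 - η, 1/2 + η)` decays geometrically in `k`; so `X_k → 1/2` in probability. Slutsky's
theorem then gives `U X_k + V (1 - X_k) → (U + V)/2` in distribution, and independence
identifies the laws of `2 (U X_k + V (1 - X_k))` and `U + V` with the pushforward of
`μ₁ ⋆_k μ₂` and with `μ₁ ∗ μ₂`.
-/

open MeasureTheory ProbabilityTheory Filter Topology Set

/-- The Beta function `B(a,b) = Γ(a)Γ(b)/Γ(a+b)`. -/
noncomputable def betaFun (a b : ℝ) : ℝ := Real.Gamma a * Real.Gamma b / Real.Gamma (a + b)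

/-- The Beta(a,b) distribution on (0,1), with density `x^(a-1)(1-x)^(b-1)/B(a,b)`
on `(0,1)` and zero elsewhere. -/
noncomputable def betaMeasure (a b : ℝ) : Measure ℝ :=
  MeasureTheory.volume.withDensity fun x =>
    ENNReal.ofReal (if x ∈ Set.Ioo (0 : ℝ) 1 then
      x ^ (a - 1) * (1 - x) ^ (b - 1) / betaFun a b else 0)

/-- The modified Stieltjes transform `R_γ(u; μ) = ∫ (1 - i u x)^(-γ) dμ(x)`
(principal branch of the complex power). -/
noncomputable def stieltjesR (γ : ℝ) (μ : Measure ℝ) (u : ℝ) : ℂ :=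
  ∫ x, (1 - (u * x : ℝ) * Complex.I) ^ (-(γ : ℂ)) ∂μ

/-- The rising factorial (Pochhammer symbol) `(s)_j = s(s+1)⋯(s+j-1)`, `(s)_0 = 1`. -/
noncomputable def risingFac (s : ℝ) (j : ℕ) : ℝ := ∏ i ∈ Finset.range j, (s + i)

/-- The `β̃_{A,B}(α,β)` distribution on `(A,B)`, with density
`(x-A)^(α-1)(B-x)^(β-1)/(B(α,β)(B-A)^(α+β-1))` on `(A,B)` and zero elsewhere. -/
noncomputable def tildeBetaMeasure (A B α β : ℝ) : Measure ℝ :=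
  MeasureTheory.volume.withDensity fun x =>
    ENNReal.ofReal (if x ∈ Set.Ioo A B then
      (x - A) ^ (α - 1) * (B - x) ^ (β - 1) / (betaFun α β * (B - A) ^ (α + β - 1)) else 0)

/-- The generalized convolution `μ₁ ⋆_n μ₂`: the law of `U·X + V·(1-X)` where `U, V, X`
are independent with laws `μ₁`, `μ₂` and Beta(n,n) respectively. -/
noncomputable def genConv (n : ℝ) (μ₁ μ₂ : Measure ℝ) : Measure ℝ :=
  Measure.map (fun p : ℝ × ℝ × ℝ => p.1 * p.2.2 + p.2.1 * (1 - p.2.2))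
    (μ₁.prod (μ₂.prod (_root_.betaMeasure n n)))

open scoped ENNReal

lemma betaFun_eq_beta : betaFun = beta := rfl

lemma betaMeasure_eq_probabilityTheory_betaMeasure (a b : ℝ) :
    _root_.betaMeasure a b = ProbabilityTheory.betaMeasure a b := by
  rw [_root_.betaMeasure, ProbabilityTheory.betaMeasure, betaFun_eq_beta]
  congr with x
  rw [betaPDF_eq]
  simp only [mem_Ioo]
  congr 1
  split_ifs <;> ring

lemma isProbabilityMeasure_betaMeasure {a b : ℝ} (ha : 0 < a) (hb : 0 < b) :
    IsProbabilityMeasure (_root_.betaMeasure a b) :=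
  betaMeasure_eq_probabilityTheory_betaMeasure a b ▸ isProbabilityMeasureBeta ha hb

section withDensity

variable {α : Type*} [MeasurableSpace α] {μ : Measure α} {f : α → ℝ≥0∞} {s : Set α}
  {C : ℝ≥0∞}

lemma withDensity_apply_le_mul (hs : MeasurableSet s) (hf : ∀ x ∈ s, f x ≤ C) :
    μ.withDensity f s ≤ C * μ s := by
  rw [withDensity_apply _ hs, ← setLIntegral_const]
  exact setLIntegral_mono' hs hf

lemma mul_le_withDensity_apply (hs : MeasurableSet s) (hf : ∀ x ∈ s, C ≤ f x) :
    C * μ s ≤ μ.withDensity f s := by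
  rw [withDensity_apply _ hs, ← setLIntegral_const]
  exact setLIntegral_mono' hs hf

end withDensity

lemma betaMeasure_compl_Ioo (a b : ℝ) : _root_.betaMeasure a b (Ioo 0 1)ᶜ = 0 := by
  rw [_root_.betaMeasure, withDensity_apply _ measurableSet_Ioo.compl]
  exact setLIntegral_eq_zero measurableSet_Ioo.compl fun x hx => by rw [if_neg hx]; simp

lemma betaMeasure_density_of_mem_Ioo {a x : ℝ} (hx : x ∈ Ioo (0 : ℝ) 1) :
    x ^ (a - 1) * (1 - x) ^ (a - 1) / betaFun a a =
      (1 / 4 - (x - 1 / 2) ^ 2) ^ (a - 1) / betaFun a a := by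
  rw [← Real.mul_rpow hx.1.le (by linarith [hx.2])]
  ring_nf

lemma betaMeasure_tail_le {a η : ℝ} (ha : 1 ≤ a) (hη : 0 ≤ η) :
    _root_.betaMeasure a a {x | η ≤ |x - 1 / 2|} ≤
      ENNReal.ofReal ((1 / 4 - η ^ 2) ^ (a - 1) / betaFun a a) := by
  have hB : 0 < betaFun a a := beta_pos (by linarith) (by linarith)
  have hs : MeasurableSet {x : ℝ | η ≤ |x - 1 / 2|} :=
    measurableSet_le measurable_const (by fun_prop)
  rw [← measure_inter_conull (betaMeasure_compl_Ioo a a)]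
  calc _root_.betaMeasure a a ({x | η ≤ |x - 1 / 2|} ∩ Ioo 0 1)
      ≤ ENNReal.ofReal ((1 / 4 - η ^ 2) ^ (a - 1) / betaFun a a) *
          volume ({x : ℝ | η ≤ |x - 1 / 2|} ∩ Ioo 0 1) := by
        refine withDensity_apply_le_mul (hs.inter measurableSet_Ioo) fun x ⟨hxη, hx⟩ => ?_
        rw [if_pos hx, betaMeasure_density_of_mem_Ioo hx]
        refine ENNReal.ofReal_le_ofReal (div_le_div_of_nonneg_right ?_ hB.le)
        refine Real.rpow_le_rpow (by nlinarith [hx.1, hx.2]) ?_ (by linarith)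
        nlinarith [sq_abs (x - 1 / 2), mul_le_mul hxη hxη hη (abs_nonneg _)]
    _ ≤ ENNReal.ofReal ((1 / 4 - η ^ 2) ^ (a - 1) / betaFun a a) * 1 := by
        gcongr
        exact (measure_mono inter_subset_right).trans (by simp)
    _ = _ := mul_one _

lemma le_betaMeasure_Icc {a η : ℝ} (ha : 1 ≤ a) (hη : η < 1) :
    ENNReal.ofReal ((1 / 4 - η ^ 2 / 4) ^ (a - 1) / betaFun a a) * ENNReal.ofReal η ≤
      _root_.betaMeasure a a (Icc (1 / 2 - η / 2) (1 / 2 + η / 2)) := by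
  have hB : 0 < betaFun a a := beta_pos (by linarith) (by linarith)
  have hvol : volume (Icc (1 / 2 - η / 2) (1 / 2 + η / 2)) = ENNReal.ofReal η := by
    rw [Real.volume_Icc]; ring_nf
  rw [← hvol]
  refine mul_le_withDensity_apply measurableSet_Icc fun x ⟨hx1, hx2⟩ => ?_
  have hx : x ∈ Ioo (0 : ℝ) 1 := ⟨by linarith, by linarith⟩
  rw [if_pos hx, betaMeasure_density_of_mem_Ioo hx]
  refine ENNReal.ofReal_le_ofReal (div_le_div_of_nonneg_right ?_ hB.le)
  refine Real.rpow_le_rpow (by nlinarith) ?_ (by linarith)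
  nlinarith

lemma betaMeasure_tail_le_rpow {a η : ℝ} (ha : 1 ≤ a) (hη : 0 < η) (hη' : η ≤ 1 / 2) :
    _root_.betaMeasure a a {x | η ≤ |x - 1 / 2|} ≤
      ENNReal.ofReal (((1 / 4 - η ^ 2) / (1 / 4 - η ^ 2 / 4)) ^ (a - 1) / η) := by
  have := isProbabilityMeasure_betaMeasure (a := a) (b := a) (by linarith) (by linarith)
  have hB : 0 < betaFun a a := beta_pos (by linarith) (by linarith)
  have hA : 0 ≤ 1 / 4 - η ^ 2 := by nlinarith
  have hb : 0 < 1 / 4 - η ^ 2 / 4 := by nlinarith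
  -- the mass of the middle interval is at most one, which bounds the normalising constant
  have hmid : (1 / 4 - η ^ 2 / 4) ^ (a - 1) / betaFun a a * η ≤ 1 := by
    have h := (le_betaMeasure_Icc (η := η) ha (by linarith)).trans prob_le_one
    rwa [← ENNReal.ofReal_mul (by positivity), ENNReal.ofReal_le_one] at h
  refine (betaMeasure_tail_le ha hη.le).trans (ENNReal.ofReal_le_ofReal ?_)
  calc (1 / 4 - η ^ 2) ^ (a - 1) / betaFun a a
      = ((1 / 4 - η ^ 2) / (1 / 4 - η ^ 2 / 4)) ^ (a - 1) / η *
          ((1 / 4 - η ^ 2 / 4) ^ (a - 1) / betaFun a a * η) := by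
        have := Real.rpow_pos_of_pos hb (a - 1)
        rw [Real.div_rpow hA hb.le]
        generalize (1 / 4 - η ^ 2 / 4) ^ (a - 1) = c at *
        field_simp
    _ ≤ ((1 / 4 - η ^ 2) / (1 / 4 - η ^ 2 / 4)) ^ (a - 1) / η := by
        exact mul_le_of_le_one_right (by positivity) hmid

lemma tendsto_betaMeasure_natCast_tail {ε : ℝ} (hε : 0 < ε) :
    Tendsto (fun k : ℕ => _root_.betaMeasure k k {x | ε ≤ |x - 1 / 2|}) atTop (𝓝 0) := by
  set η := min ε (1 / 2)
  have hη : 0 < η := lt_min hε (by norm_num)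
  have hη' : η ≤ 1 / 2 := min_le_right _ _
  set r := (1 / 4 - η ^ 2) / (1 / 4 - η ^ 2 / 4)
  have hr : r < 1 := by rw [div_lt_one (by nlinarith)]; nlinarith
  have hr' : -1 < r := lt_of_lt_of_le (by norm_num) (div_nonneg (by nlinarith) (by nlinarith))
  have hbound :
      Tendsto (fun k : ℕ => ENNReal.ofReal (r ^ ((k : ℝ) - 1) / η)) atTop (𝓝 0) := by
    rw [← ENNReal.ofReal_zero, ← zero_div η]
    refine ENNReal.tendsto_ofReal (Tendsto.div_const ?_ η)
    exact (tendsto_rpow_atTop_of_base_lt_one r hr' hr).comp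
      (tendsto_atTop_add_const_right _ (-1) tendsto_natCast_atTop_atTop)
  refine tendsto_of_tendsto_of_tendsto_of_le_of_le' tendsto_const_nhds hbound
    (Eventually.of_forall fun _ => zero_le) ?_
  filter_upwards [eventually_ge_atTop 1] with k hk
  exact (measure_mono fun x (hx : ε ≤ |x - 1 / 2|) => (min_le_left _ _).trans hx).trans
    (betaMeasure_tail_le_rpow (by exact_mod_cast hk) hη hη')

section RandomVariables

variable {Ω : Type*} [MeasurableSpace Ω] {μ : Measure Ω}

lemma tendstoInMeasure_half_of_map_eq_betaMeasure {X : ℕ → Ω → ℝ}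
    (hX : ∀ᶠ k in atTop, AEMeasurable (X k) μ)
    (hlaw : ∀ᶠ k in atTop, μ.map (X k) = _root_.betaMeasure k k) :
    TendstoInMeasure μ X atTop (fun _ => 1 / 2) := by
  refine tendstoInMeasure_iff_dist.2 fun ε hε => (tendsto_betaMeasure_natCast_tail hε).congr' ?_
  filter_upwards [hX, hlaw] with k hXk hlawk
  rw [← hlawk, Measure.map_apply_of_aemeasurable hXk
    (measurableSet_le measurable_const (by fun_prop))]
  rfl

lemma tendstoInDistribution_mul_add_mul_one_sub [IsProbabilityMeasure μ] {ι : Type*}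
    {l : Filter ι} [l.IsCountablyGenerated] {U V : Ω → ℝ} {X : ι → Ω → ℝ} {c : ℝ}
    (hU : AEMeasurable U μ) (hV : AEMeasurable V μ) (hX : TendstoInMeasure μ X l fun _ => c)
    (hXm : ∀ i, AEMeasurable (X i) μ) :
    TendstoInDistribution (fun i ω => U ω * X i ω + V ω * (1 - X i ω)) l
      (fun ω => U ω * c + V ω * (1 - c)) (fun _ => μ) μ :=
  (tendstoInDistribution_const (hU.prodMk hV)).continuous_comp_prodMk_of_tendstoInMeasure_const
    (g := fun p : (ℝ × ℝ) × ℝ => p.1.1 * p.2 + p.1.2 * (1 - p.2)) (by fun_prop) hX hXm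

lemma MeasureTheory.TendstoInDistribution.tendsto_integral_map {E ι : Type*}
    [MeasurableSpace E] [TopologicalSpace E] [OpensMeasurableSpace E] [IsProbabilityMeasure μ]
    {l : Filter ι} {X : ι → Ω → E} {Z : Ω → E}
    (h : TendstoInDistribution X l Z (fun _ => μ) μ) (f : BoundedContinuousFunction E ℝ) :
    Tendsto (fun i => ∫ x, f x ∂μ.map (X i)) l (𝓝 (∫ x, f x ∂μ.map Z)) :=
  ProbabilityMeasure.tendsto_iff_forall_integral_tendsto.1 h.tendsto f

lemma MeasureTheory.TendstoInDistribution.tendsto_integral_comp {E ι : Type*}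
    [MeasurableSpace E] [TopologicalSpace E] [OpensMeasurableSpace E] [IsProbabilityMeasure μ]
    {l : Filter ι} {X : ι → Ω → E} {Z : Ω → E}
    (h : TendstoInDistribution X l Z (fun _ => μ) μ) (f : BoundedContinuousFunction E ℝ) :
    Tendsto (fun i => ∫ ω, f (X i ω) ∂μ) l (𝓝 (∫ ω, f (Z ω) ∂μ)) := by
  simpa only [integral_map (h.forall_aemeasurable _) f.continuous.aestronglyMeasurable,
    integral_map h.aemeasurable_limit f.continuous.aestronglyMeasurable]
    using h.tendsto_integral_map f

lemma map_prodMk_prodMk_eq_prod [IsFiniteMeasure μ] {β γ δ : Type*} [MeasurableSpace β]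
    [MeasurableSpace γ] [MeasurableSpace δ] {U : Ω → β} {V : Ω → γ} {W : Ω → δ}
    (hU : Measurable U) (hV : Measurable V) (hW : Measurable W)
    (hUV : IndepFun U V μ) (hUVW : IndepFun (fun ω => (U ω, V ω)) W μ) :
    μ.map (fun ω => (U ω, V ω, W ω)) = (μ.map U).prod ((μ.map V).prod (μ.map W)) := by
  have hpair := (indepFun_iff_map_prod_eq_prod_map_map hU.aemeasurable hV.aemeasurable).1 hUV
  have htriple := (indepFun_iff_map_prod_eq_prod_map_map (hU.prodMk hV).aemeasurable
    hW.aemeasurable).1 hUVW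
  rw [hpair] at htriple
  rw [← Measure.prodAssoc_prod, ← htriple,
    Measure.map_map MeasurableEquiv.prodAssoc.measurable ((hU.prodMk hV).prodMk hW)]
  rfl

lemma map_mul_add_mul_one_sub_eq_genConv [IsFiniteMeasure μ] {n : ℝ} {U V W : Ω → ℝ}
    (hU : Measurable U) (hV : Measurable V) (hW : Measurable W)
    (hUV : IndepFun U V μ) (hUVW : IndepFun (fun ω => (U ω, V ω)) W μ)
    (hWlaw : μ.map W = _root_.betaMeasure n n) :
    μ.map (fun ω => U ω * W ω + V ω * (1 - W ω)) = genConv n (μ.map U) (μ.map V) := by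
  rw [genConv, ← hWlaw, ← map_prodMk_prodMk_eq_prod hU hV hW hUV hUVW,
    Measure.map_map (by fun_prop) (hU.prodMk (hV.prodMk hW))]
  rfl

end RandomVariables

/-- With `U, V` independent of laws `μ₁, μ₂` and `X k ~ Beta(k,k)` independent of `(U,V)`,
the law of `U·X_k + V·(1-X_k)` converges weakly to the law of `(U+V)/2` as `k → ∞`;
equivalently, the pushforward of `μ₁ ⋆_k μ₂` under `x ↦ 2x` converges weakly to the
ordinary convolution `μ₁ ∗ μ₂`. -/
theorem genConv_tendsto_ordinary_convolution
    {Ω : Type*} [MeasureSpace Ω] [IsProbabilityMeasure (ℙ : Measure Ω)]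
    (U V : Ω → ℝ) (X : ℕ → Ω → ℝ)
    (hU : Measurable U) (hV : Measurable V) (hX : ∀ k, Measurable (X k))
    (μ₁ μ₂ : Measure ℝ)
    (hUlaw : Measure.map U ℙ = μ₁) (hVlaw : Measure.map V ℙ = μ₂)
    (hUV : IndepFun U V ℙ)
    (hXindep : ∀ k, 1 ≤ k → IndepFun (fun ω => (U ω, V ω)) (X k) ℙ)
    (hXlaw : ∀ k, 1 ≤ k → Measure.map (X k) ℙ = _root_.betaMeasure k k) :
    (∀ f : BoundedContinuousFunction ℝ ℝ,
        Tendsto (fun k : ℕ => ∫ ω, f (U ω * X k ω + V ω * (1 - X k ω)) ∂ℙ)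
          atTop (𝓝 (∫ ω, f ((U ω + V ω) / 2) ∂ℙ))) ∧
      ∀ f : BoundedContinuousFunction ℝ ℝ,
        Tendsto (fun k : ℕ => ∫ x, f x ∂(Measure.map (fun x => 2 * x) (genConv k μ₁ μ₂)))
          atTop (𝓝 (∫ x, f x ∂(μ₁.conv μ₂))) := by
  subst hUlaw hVlaw
  have hY : TendstoInDistribution (fun k ω => U ω * X k ω + V ω * (1 - X k ω)) atTop
      (fun ω => (U ω + V ω) / 2) (fun _ => ℙ) ℙ := by
    convert tendstoInDistribution_mul_add_mul_one_sub hU.aemeasurable hV.aemeasurable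
      (tendstoInMeasure_half_of_map_eq_betaMeasure (.of_forall fun k => (hX k).aemeasurable)
        (eventually_atTop.2 ⟨1, hXlaw⟩)) fun k => (hX k).aemeasurable using 2 with ω
    ring
  refine ⟨hY.tendsto_integral_comp, fun f => ?_⟩
  have hsum : (Measure.map U ℙ).conv (Measure.map V ℙ) =
      Measure.map (fun ω => 2 * ((U ω + V ω) / 2)) ℙ := by
    rw [← hUV.map_add_eq_map_conv_map hU hV]
    congr with ω
    simp only [Pi.add_apply]
    ring
  rw [hsum]
  refine ((hY.continuous_comp (continuous_const_mul 2)).tendsto_integral_map f).congr' ?_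
  filter_upwards [eventually_ge_atTop 1] with k hk
  rw [← map_mul_add_mul_one_sub_eq_genConv hU hV (hX k) hUV (hXindep k hk) (hXlaw k hk),
    Measure.map_map (by fun_prop) (by fun_prop)]
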